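/- Let G be a biextraspecial group, D₁ and D₂ distinct dents with diagonal dent D₃ = D₁ + D₂, and D any dent. Then either D commutes with all three of D₁, D₂, D₃, or D commutes with exactly one of them. -/

import Mathlib

/-- The centre of the subgroup `Q`, viewed as a subgroup of the ambient group `G`. -/
def centerOf (G : Type*) [Group G] (Q : Subgroup G) : Subgroup G :=
  Subgroup.centralizer (Q : Set G) ⊓ Q

open scoped commutatorElement

/-- A biextraspecial group of rank `m`: `G` is an extension of a special 2-group
`Q` of order `2^(2+2m)` by `L₂(2) ≅ S₃`, the centre `Z = Z(Q) ≅ 2²` is the natural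
module (elementary abelian of order 4 with faithful induced `G/Q`-action), `Q/Z` is
elementary abelian, and every element of order 3 acts fixed-point-freely on `Q`
(equivalently, `Q/Z` has only natural composition factors). -/
structure IsBiextraspecial (G : Type*) [Group G] (Q : Subgroup G) (m : ℕ) : Prop where
  normal : Q.Normal
  card_Q : Nat.card Q = 2 ^ (2 + 2 * m)
  quot_iso : Nonempty ((G ⧸ Q) ≃* Equiv.Perm (Fin 3))
  card_center : Nat.card (centerOf G Q) = 4
  center_exponent : ∀ z ∈ centerOf G Q, z * z = 1
  center_faithful : ∀ g : G, (∀ z ∈ centerOf G Q, g * z * g⁻¹ = z) → g ∈ Q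
  sq_mem_center : ∀ q ∈ Q, q * q ∈ centerOf G Q
  comm_mem_center : ∀ q ∈ Q, ∀ r ∈ Q, ⁅q, r⁆ ∈ centerOf G Q
  order_three_fpf : ∀ g : G, orderOf g = 3 → ∀ q ∈ Q, g * q * g⁻¹ = q → q = 1

/-- A dent: a normal subgroup `D` of `G` with `Z(Q) < D < Q` such that `D/Z` is an
irreducible `L`-submodule of `Q/Z` (i.e. `D` is minimal among normal subgroups
strictly containing `Z(Q)`). -/
structure IsDent (G : Type*) [Group G] (Q D : Subgroup G) : Prop where
  normal : D.Normal
  center_lt : centerOf G Q < D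
  lt_Q : D < Q
  minimal : ∀ E : Subgroup G, E.Normal → centerOf G Q < E → E ≤ D → E = D

/-- `D₃` is the diagonal dent of the distinct dents `D₁` and `D₂`: the unique third
dent contained in `D₁D₂`. -/
def IsDiagonal (G : Type*) [Group G] (Q D₁ D₂ D₃ : Subgroup G) : Prop :=
  IsDent G Q D₁ ∧ IsDent G Q D₂ ∧ IsDent G Q D₃ ∧
    D₁ ≠ D₂ ∧ D₃ ≠ D₁ ∧ D₃ ≠ D₂ ∧ D₃ ≤ D₁ ⊔ D₂

/-- Two subgroups commute elementwise, i.e. `[D₁, D₂] = 1`. -/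
def DentsCommute (G : Type*) [Group G] (D₁ D₂ : Subgroup G) : Prop :=
  ∀ d₁ ∈ D₁, ∀ d₂ ∈ D₂, d₁ * d₂ = d₂ * d₁

/-- A dent is singular when it is elementary abelian (of type `2⁴`). -/
def IsSingularDent (G : Type*) [Group G] (D : Subgroup G) : Prop :=
  ∀ d ∈ D, d * d = 1

/-- A standard basis `x, y` of a dent `D` with respect to `L = ⟨s, t⟩`:
`D = ⟨x, y, Z⟩` with `xᵗ = x`, `xˢ = y` and `yˢ = xy` (singular case) or
`yˢ = x⁻¹y⁻¹` (non-singular case). -/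
structure StdBasis (G : Type*) [Group G] (Q : Subgroup G) (s t : G)
    (D : Subgroup G) (x y : G) : Prop where
  x_mem : x ∈ D
  x_notin : x ∉ centerOf G Q
  gen : D = centerOf G Q ⊔ Subgroup.closure {x, y}
  t_fix : t * x * t⁻¹ = x
  s_x : s * x * s⁻¹ = y
  s_y : s * y * s⁻¹ = x * y ∨ s * y * s⁻¹ = x⁻¹ * y⁻¹

/-!
Write `Z` for `centerOf G Q` and let `s, t ∈ G` map to an element of order 3 and an involution
of `G ⧸ Q ≅ S₃`. Commutation is a bilinear pairing `Q ⧸ Z × Q ⧸ Z → Z`. As `s` acts without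
fixed points, `x · xˢ · xˢˢ ∈ Z` for every `x ∈ Q`, so a dent is generated modulo `Z` by any
element outside `Z` fixed by `t` modulo `Z` and its `s`-conjugate, and the relations
`⁅x, y⁆ ⁅x, yˢ⁆ ⁅x, yˢˢ⁆ = 1` show that two dents commute as soon as two such generators do.

Each of `D₁, D₂, D₃` lies in the product of the other two, so a dent commuting with two of them
commutes with the third. If `D` commutes with none of them, take `d ∈ D` and `e = f₁ f₂ ∈ D₃`
outside `Z` and fixed by `t` modulo `Z`, with `fᵢ ∈ Dᵢ`; then so are `f₁, f₂`, and `⁅d, f₁⁆`,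
`⁅d, f₂⁆` are nontrivial `t`-fixed elements of `Z ≅ 2²`. As `G ⧸ Q` acts faithfully on `Z`,
`t` fixes only one nontrivial element, so `⁅d, e⁆ = ⁅d, f₁⁆ ⁅d, f₂⁆ = 1`, a contradiction.
-/

section centralizerMod

variable {G : Type*} [Group G]

def centralizerMod (N : Subgroup G) [N.Normal] (g : G) : Subgroup G where
  carrier := {x | ⁅g, x⁆ ∈ N}
  one_mem' := by simp
  mul_mem' {x y} hx hy := by
    rw [Set.mem_ofPred_eq, commutatorElement_mul_right_eq_mul_conj, mul_assoc _ x, mul_assoc]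
    exact mul_mem hx (‹N.Normal›.conj_mem _ hy x)
  inv_mem' {x} hx := by
    rw [Set.mem_ofPred_eq, commutatorElement_inv_right, ← commutatorElement_inv]
    simpa using ‹N.Normal›.conj_mem _ (inv_mem hx) x⁻¹

@[simp]
theorem mem_centralizerMod {N : Subgroup G} [N.Normal] {g x : G} :
    x ∈ centralizerMod N g ↔ ⁅g, x⁆ ∈ N :=
  Iff.rfl

theorem le_centralizerMod (N : Subgroup G) [hN : N.Normal] (g : G) : N ≤ centralizerMod N g :=
  fun x hx => by
    rw [mem_centralizerMod, commutatorElement_def]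
    exact mul_mem (hN.conj_mem x hx g) (inv_mem hx)

end centralizerMod

theorem conj_mem_sup_closure {G : Type*} [Group G] {N : Subgroup G} [hN : N.Normal] {S : Set G}
    {g : G} (hS : ∀ x ∈ S, g * x * g⁻¹ ∈ N ⊔ Subgroup.closure S) :
    ∀ y ∈ N ⊔ Subgroup.closure S, g * y * g⁻¹ ∈ N ⊔ Subgroup.closure S := by
  show N ⊔ Subgroup.closure S ≤ (N ⊔ Subgroup.closure S).comap (MulAut.conj g).toMonoidHom
  exact sup_le (fun n hn => Subgroup.mem_sup_left (hN.conj_mem n hn g))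
    (Subgroup.closure_le _ |>.mpr hS)

theorem Subgroup.eq_of_le_of_card_eq_four {G : Type*} [Group G] {H K : Subgroup G} (hHK : H ≤ K)
    (hK : Nat.card K = 4) {x y : G} (hx : x ∈ H) (hy : y ∈ H) (hx1 : x ≠ 1) (hy1 : y ≠ 1)
    (hxy : x ≠ y) : H = K := by
  have : Finite K := Nat.finite_of_card_ne_zero (by rw [hK]; norm_num)
  have : Finite H := Finite.of_injective _ (Subgroup.inclusion_injective hHK)
  have hthree : 3 ≤ Nat.card H := by
    have hsub : ({1, x, y} : Set G) ⊆ H := by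
      rintro g (rfl | rfl | rfl) <;> simp_all
    rw [← SetLike.coe_sort_coe, Nat.card_coe_set_eq,
      ← Set.ncard_eq_three.mpr ⟨1, x, y, hx1.symm, hy1.symm, hxy, rfl⟩]
    exact Set.ncard_le_ncard hsub (Set.toFinite _)
  have hdvd : Nat.card H ∣ 4 := hK ▸ Subgroup.card_dvd_of_le hHK
  have hle := Nat.le_of_dvd (by norm_num) hdvd
  interval_cases h : Nat.card H
  · norm_num at hdvd
  · exact Subgroup.eq_of_le_of_card_ge hHK (by rw [h, hK])

theorem dentsCommute_iff_le_centralizer {G : Type*} [Group G] {D E : Subgroup G} :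
    DentsCommute G D E ↔ E ≤ Subgroup.centralizer (D : Set G) :=
  ⟨fun h _ he => Subgroup.mem_centralizer_iff.mpr fun d hd => h d hd _ he,
    fun h d hd _ he => Subgroup.mem_centralizer_iff.mp (h he) d hd⟩

theorem DentsCommute.of_le_sup {G : Type*} [Group G] {D X Y W : Subgroup G}
    (hX : DentsCommute G D X) (hY : DentsCommute G D Y) (hW : W ≤ X ⊔ Y) : DentsCommute G D W := by
  rw [dentsCommute_iff_le_centralizer] at *
  exact hW.trans (sup_le hX hY)

theorem IsDent.inf_le_centerOf {G : Type*} [Group G] {Q D E : Subgroup G} (hD : IsDent G Q D)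
    (hE : IsDent G Q E) (hne : D ≠ E) : D ⊓ E ≤ centerOf G Q := by
  have := hD.normal
  have := hE.normal
  by_contra h
  have hlt : centerOf G Q < D ⊓ E := lt_of_le_not_ge (le_inf hD.center_lt.le hE.center_lt.le) h
  have hDE : D ⊓ E = D := hD.minimal _ inferInstance hlt inf_le_left
  exact hne (hE.minimal D hD.normal hD.center_lt (hDE ▸ inf_le_right))

theorem IsDent.le_sup_of_le_sup {G : Type*} [Group G] {Q D₁ D₂ D₃ : Subgroup G}
    (h₁ : IsDent G Q D₁) (h₂ : IsDent G Q D₂) (h₃ : IsDent G Q D₃) (h₃₁ : D₃ ≠ D₁)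
    (hle : D₃ ≤ D₁ ⊔ D₂) : D₂ ≤ D₁ ⊔ D₃ := by
  have := h₁.normal
  have := h₂.normal
  have := h₃.normal
  obtain ⟨x, hx₃, hxZ⟩ := SetLike.exists_of_lt h₃.center_lt
  obtain ⟨a, ha, b, hb, rfl⟩ := Subgroup.mem_sup_of_normal_right.mp (hle hx₃)
  have hbZ : b ∉ centerOf G Q := fun h =>
    hxZ (h₃.inf_le_centerOf h₁ h₃₁ ⟨hx₃, mul_mem ha (h₁.center_lt.le h)⟩)
  have hb₁₃ : b ∈ D₁ ⊔ D₃ := by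
    simpa using mul_mem (Subgroup.mem_sup_left (inv_mem ha)) (Subgroup.mem_sup_right hx₃)
  have hlt : centerOf G Q < (D₁ ⊔ D₃) ⊓ D₂ := lt_of_le_of_ne
    (le_inf (h₁.center_lt.le.trans le_sup_left) h₂.center_lt.le) fun h => hbZ (h ▸ ⟨hb₁₃, hb⟩)
  rw [← h₂.minimal _ inferInstance hlt inf_le_right]
  exact inf_le_left

theorem IsDent.commutatorElement_mem_centerOf_of_mul {G : Type*} [Group G]
    {Q D₁ D₂ : Subgroup G} [(centerOf G Q).Normal] (h₁ : IsDent G Q D₁) (h₂ : IsDent G Q D₂)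
    (h₁₂ : D₁ ≠ D₂) {g f₁ f₂ : G} (hf₁ : f₁ ∈ D₁) (hf₂ : f₂ ∈ D₂)
    (h : ⁅g, f₁ * f₂⁆ ∈ centerOf G Q) : ⁅g, f₁⁆ ∈ centerOf G Q ∧ ⁅g, f₂⁆ ∈ centerOf G Q := by
  have := h₁.normal
  have := h₂.normal
  have hf₁g : ⁅g, f₁⁆ ∈ centerOf G Q := by
    refine h₁.inf_le_centerOf h₂ h₁₂ ⟨le_centralizerMod D₁ g hf₁, ?_⟩
    show ⁅g, f₁⁆ ∈ D₂
    rw [← mem_centralizerMod, show f₁ = f₁ * f₂ * f₂⁻¹ by group]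
    exact mul_mem (h₂.center_lt.le h) (inv_mem (le_centralizerMod D₂ g hf₂))
  refine ⟨hf₁g, ?_⟩
  rw [← mem_centralizerMod, show f₂ = f₁⁻¹ * (f₁ * f₂) by group]
  exact mul_mem (inv_mem hf₁g) h

section PermThree

variable {H : Type*} [Group H] (e : H ≃* Equiv.Perm (Fin 3)) {x y : H}
include e

theorem mul_conj_eq_one_of_mulEquiv_perm_three (hx3 : x ^ 3 = 1) (hx1 : x ≠ 1)
    (hy2 : y ^ 2 = 1) (hy1 : y ≠ 1) : x * (y * x * y⁻¹) = 1 := by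
  have key : ∀ x y : Equiv.Perm (Fin 3), x ^ 3 = 1 → x ≠ 1 → y ^ 2 = 1 → y ≠ 1 →
      x * (y * x * y⁻¹) = 1 := by decide
  apply e.injective
  simpa using key (e x) (e y) (by rw [← map_pow, hx3, map_one]) (by simpa using hx1)
    (by rw [← map_pow, hy2, map_one]) (by simpa using hy1)

theorem closure_pair_eq_top_of_mulEquiv_perm_three (hx3 : x ^ 3 = 1) (hx1 : x ≠ 1)
    (hy2 : y ^ 2 = 1) (hy1 : y ≠ 1) : Subgroup.closure {x, y} = ⊤ := by
  have key : ∀ x y g : Equiv.Perm (Fin 3), x ^ 3 = 1 → x ≠ 1 → y ^ 2 = 1 → y ≠ 1 →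
      ∃ i < 3, ∃ j < 2, g = x ^ i * y ^ j := by decide
  refine eq_top_iff.mpr fun g _ => ?_
  obtain ⟨i, -, j, -, h⟩ := key (e x) (e y) (e g) (by rw [← map_pow, hx3, map_one])
    (by simpa using hx1) (by rw [← map_pow, hy2, map_one]) (by simpa using hy1)
  rw [← map_pow, ← map_pow, ← map_mul, e.injective.eq_iff] at h
  rw [h]
  exact mul_mem (pow_mem (Subgroup.subset_closure (by simp)) i)
    (pow_mem (Subgroup.subset_closure (by simp)) j)

end PermThree

/-- Lifts to `G` of generators of `G ⧸ Q ≅ S₃`: `s` of order 3 and an involution `t` modulo `Q`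
inverting `s` modulo `Q`. -/
structure S3Lift (G : Type*) [Group G] (Q : Subgroup G) where
  s : G
  t : G
  orderOf_s : orderOf s = 3
  s_notMem : s ∉ Q
  t_notMem : t ∉ Q
  t_sq_mem : t ^ 2 ∈ Q
  mul_conj_mem : s * (t * s * t⁻¹) ∈ Q

section centerOf

variable {G : Type*} [Group G] {Q : Subgroup G}

theorem centerOf_le : centerOf G Q ≤ Q := inf_le_right

theorem commute_of_mem_centerOf {z q : G} (hz : z ∈ centerOf G Q) (hq : q ∈ Q) :
    Commute q z :=
  Subgroup.mem_centralizer_iff.mp hz.1 q hq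

theorem commutatorElement_eq_one_of_mem_centerOf_right {p z : G} (hp : p ∈ Q)
    (hz : z ∈ centerOf G Q) : ⁅p, z⁆ = 1 :=
  commutatorElement_eq_one_iff_commute.mpr (commute_of_mem_centerOf hz hp)

theorem commutatorElement_eq_one_of_mem_centerOf_left {p z : G} (hp : p ∈ Q)
    (hz : z ∈ centerOf G Q) : ⁅z, p⁆ = 1 :=
  commutatorElement_eq_one_iff_commute.mpr (commute_of_mem_centerOf hz hp).symm

end centerOf

namespace IsBiextraspecial

variable {G : Type*} [Group G] {Q : Subgroup G} {m : ℕ} (hG : IsBiextraspecial G Q m)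
include hG

theorem centerOf_normal : (centerOf G Q).Normal where
  conj_mem z hz g := by
    refine ⟨Subgroup.mem_centralizer_iff.mpr fun q hq => ?_, hG.normal.conj_mem z hz.2 g⟩
    have hq' : g⁻¹ * q * g ∈ Q := by simpa using hG.normal.conj_mem q hq g⁻¹
    have := (commute_of_mem_centerOf hz hq').eq
    calc q * (g * z * g⁻¹) = g * ((g⁻¹ * q * g) * z) * g⁻¹ := by group
      _ = g * (z * (g⁻¹ * q * g)) * g⁻¹ := by rw [this]
      _ = g * z * g⁻¹ * q := by group

theorem inv_eq_self_of_mem_centerOf {z : G} (hz : z ∈ centerOf G Q) : z⁻¹ = z :=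
  inv_eq_of_mul_eq_one_right (hG.center_exponent z hz)

theorem commutatorElement_mul_right {p q r : G} (hp : p ∈ Q) (hq : q ∈ Q) (hr : r ∈ Q) :
    ⁅p, q * r⁆ = ⁅p, q⁆ * ⁅p, r⁆ := by
  rw [commutatorElement_mul_right_eq_mul_conj, mul_assoc _ q,
    (commute_of_mem_centerOf (hG.comm_mem_center p hp r hr) hq).eq]
  group

theorem commutatorElement_mul_left {p q r : G} (hp : p ∈ Q) (hq : q ∈ Q) (hr : r ∈ Q) :
    ⁅p * q, r⁆ = ⁅p, r⁆ * ⁅q, r⁆ := by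
  have hqr := hG.comm_mem_center q hq r hr
  rw [commutatorElement_mul_left_eq_conj_mul, (commute_of_mem_centerOf hqr hp).eq,
    (commute_of_mem_centerOf hqr (centerOf_le (hG.comm_mem_center p hp r hr))).eq]
  group

theorem commutatorElement_mul_centerOf {p q z w : G} (hp : p ∈ Q) (hq : q ∈ Q)
    (hz : z ∈ centerOf G Q) (hw : w ∈ centerOf G Q) : ⁅z * p, w * q⁆ = ⁅p, q⁆ := by
  have hwq : w * q ∈ Q := mul_mem (centerOf_le hw) hq
  rw [hG.commutatorElement_mul_left (centerOf_le hz) hp hwq,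
    commutatorElement_eq_one_of_mem_centerOf_left hwq hz, one_mul,
    hG.commutatorElement_mul_right hp (centerOf_le hw) hq,
    commutatorElement_eq_one_of_mem_centerOf_right hp hw, one_mul]

section OrderThree

variable {s : G} (hs : orderOf s = 3)
include hs

theorem mul_conj_mul_conj_eq_one_of_mem_centerOf {z : G} (hz : z ∈ centerOf G Q) :
    z * (s * z * s⁻¹) * (s * (s * z * s⁻¹) * s⁻¹) = 1 := by
  have hZ := hG.centerOf_normal
  have hz' := hZ.conj_mem z hz s
  have hz'' := hZ.conj_mem _ hz' s
  refine hG.order_three_fpf s hs _ (centerOf_le (mul_mem (mul_mem hz hz') hz'')) ?_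
  have hs3 : s ^ 3 = 1 := hs ▸ pow_orderOf_eq_one s
  calc s * (z * (s * z * s⁻¹) * (s * (s * z * s⁻¹) * s⁻¹)) * s⁻¹
      = (s * z * s⁻¹) * (s * (s * z * s⁻¹) * s⁻¹) * (s ^ 3 * z * (s ^ 3)⁻¹) := by group
    _ = z * ((s * z * s⁻¹) * (s * (s * z * s⁻¹) * s⁻¹)) := by
      rw [hs3, one_mul, inv_one, mul_one,
        (commute_of_mem_centerOf hz (centerOf_le (mul_mem hz' hz''))).eq]
    _ = _ := by group

/-- If `s q s⁻¹ = c q` with `c ∈ Z`, then `cˢ q` is fixed by `s`, since `c cˢ cˢˢ = 1` and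
`(cˢ)² = 1`. -/
theorem mem_centerOf_of_commutatorElement_mem {q : G} (hq : q ∈ Q)
    (h : ⁅s, q⁆ ∈ centerOf G Q) : q ∈ centerOf G Q := by
  set c := ⁅s, q⁆
  have hc' : s * c * s⁻¹ ∈ centerOf G Q := hG.centerOf_normal.conj_mem c h s
  have hc'' : s * (s * c * s⁻¹) * s⁻¹ = (c * (s * c * s⁻¹))⁻¹ :=
    eq_inv_of_mul_eq_one_right (hG.mul_conj_mul_conj_eq_one_of_mem_centerOf hs h)
  have hfix : s * ((s * c * s⁻¹) * q) * s⁻¹ = (s * c * s⁻¹) * q := by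
    calc s * ((s * c * s⁻¹) * q) * s⁻¹ = (s * (s * c * s⁻¹) * s⁻¹) * (c * q) := by
          simp only [c, commutatorElement_def]; group
      _ = (s * c * s⁻¹)⁻¹ * q := by rw [hc'']; group
      _ = (s * c * s⁻¹) * q := by rw [hG.inv_eq_self_of_mem_centerOf hc']
  have := hG.order_three_fpf s hs _ (mul_mem (centerOf_le hc') hq) hfix
  rw [eq_inv_of_mul_eq_one_right this]
  exact inv_mem hc'

theorem mul_conj_mul_conj_mem_centerOf {q : G} (hq : q ∈ Q) :
    q * (s * q * s⁻¹) * (s * (s * q * s⁻¹) * s⁻¹) ∈ centerOf G Q := by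
  have hq' : s * q * s⁻¹ ∈ Q := hG.normal.conj_mem q hq s
  have hq'' : s * (s * q * s⁻¹) * s⁻¹ ∈ Q := hG.normal.conj_mem _ hq' s
  refine hG.mem_centerOf_of_commutatorElement_mem hs (mul_mem (mul_mem hq hq') hq'') ?_
  have hs3 : s ^ 3 = 1 := hs ▸ pow_orderOf_eq_one s
  have : ⁅s, q * (s * q * s⁻¹) * (s * (s * q * s⁻¹) * s⁻¹)⁆ =
      (s * q * s⁻¹) * (s * (s * q * s⁻¹) * s⁻¹) * (s ^ 3 * q * (s ^ 3)⁻¹) *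
        ((s * q * s⁻¹) * (s * (s * q * s⁻¹) * s⁻¹))⁻¹ * q⁻¹ := by
    simp only [commutatorElement_def]; group
  rw [this, hs3, one_mul, inv_one, mul_one, ← commutatorElement_def]
  exact hG.comm_mem_center _ (mul_mem hq' hq'') q hq

theorem commutatorElement_mul_mul_eq_one_right {p q : G} (hp : p ∈ Q) (hq : q ∈ Q) :
    ⁅p, q⁆ * ⁅p, s * q * s⁻¹⁆ * ⁅p, s * (s * q * s⁻¹) * s⁻¹⁆ = 1 := by
  have hq' : s * q * s⁻¹ ∈ Q := hG.normal.conj_mem q hq s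
  have hq'' : s * (s * q * s⁻¹) * s⁻¹ ∈ Q := hG.normal.conj_mem _ hq' s
  rw [← hG.commutatorElement_mul_right hp hq hq', ← hG.commutatorElement_mul_right hp
    (mul_mem hq hq') hq'']
  exact commutatorElement_eq_one_of_mem_centerOf_right hp
    (hG.mul_conj_mul_conj_mem_centerOf hs hq)

theorem commutatorElement_mul_mul_eq_one_left {p q : G} (hp : p ∈ Q) (hq : q ∈ Q) :
    ⁅p, q⁆ * ⁅s * p * s⁻¹, q⁆ * ⁅s * (s * p * s⁻¹) * s⁻¹, q⁆ = 1 := by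
  have hp' : s * p * s⁻¹ ∈ Q := hG.normal.conj_mem p hp s
  have hp'' : s * (s * p * s⁻¹) * s⁻¹ ∈ Q := hG.normal.conj_mem _ hp' s
  rw [← hG.commutatorElement_mul_left hp hp' hq, ← hG.commutatorElement_mul_left
    (mul_mem hp hp') hp'' hq]
  exact commutatorElement_eq_one_of_mem_centerOf_left hq
    (hG.mul_conj_mul_conj_mem_centerOf hs hp)

/-- Write `x'` for `s x s⁻¹` and `c = ⁅a, b'⁆`. The two orbit relations give `⁅a', b⁆ = (c')⁻¹`
and then `⁅a'', b⁆ = c'`, while conjugating `⁅a', b''⁆ = c'` by `s` gives `⁅a'', b⁆ = c''`;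
so `c'` is fixed by `s`, hence trivial. -/
theorem commutatorElement_conj_right_eq_one {a b : G} (ha : a ∈ Q) (hb : b ∈ Q)
    (hab : ⁅a, b⁆ = 1) : ⁅a, s * b * s⁻¹⁆ = 1 := by
  have ha' : s * a * s⁻¹ ∈ Q := hG.normal.conj_mem a ha s
  have hs3 : s ^ 3 = 1 := hs ▸ pow_orderOf_eq_one s
  set c := ⁅a, s * b * s⁻¹⁆
  have hc' : ⁅s * a * s⁻¹, s * (s * b * s⁻¹) * s⁻¹⁆ = s * c * s⁻¹ := by
    rw [conjugate_commutatorElement]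
  have h₁ : ⁅s * a * s⁻¹, b⁆ = (s * c * s⁻¹)⁻¹ := by
    have := hG.commutatorElement_mul_mul_eq_one_right hs ha' hb
    rw [← conjugate_commutatorElement, hab, hc'] at this
    exact eq_inv_of_mul_eq_one_left (by simpa using this)
  have h₂ : ⁅s * (s * a * s⁻¹) * s⁻¹, b⁆ = s * c * s⁻¹ := by
    have := hG.commutatorElement_mul_mul_eq_one_left hs ha hb
    rw [hab, h₁, one_mul] at this
    simpa using eq_inv_of_mul_eq_one_right this
  have h₃ : ⁅s * (s * a * s⁻¹) * s⁻¹, b⁆ = s * (s * c * s⁻¹) * s⁻¹ := by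
    rw [← hc', conjugate_commutatorElement]
    congr 1
    calc b = s ^ 3 * b * (s ^ 3)⁻¹ := by rw [hs3]; group
      _ = _ := by rw [pow_three]; group
  have hc'Z : s * c * s⁻¹ ∈ Q :=
    hG.normal.conj_mem c (centerOf_le (hG.comm_mem_center a ha _ (hG.normal.conj_mem b hb s))) s
  have := hG.order_three_fpf s hs _ hc'Z (h₃.symm.trans h₂)
  exact conj_eq_one_iff.mp this

end OrderThree

theorem card_quotient : Nat.card (G ⧸ Q) = 6 := by
  have := hG.normal
  obtain ⟨e⟩ := hG.quot_iso
  rw [Nat.card_congr e.toEquiv, Nat.card_perm, Nat.card_eq_fintype_card, Fintype.card_fin]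
  rfl

theorem nonempty_s3Lift : Nonempty (S3Lift G Q) := by
  have := hG.normal
  obtain ⟨e⟩ := hG.quot_iso
  have hcard : Nat.card G = 6 * 2 ^ (2 + 2 * m) := by
    rw [Subgroup.card_eq_card_quotient_mul_card_subgroup Q, hG.card_quotient, hG.card_Q]
  have : Finite G := Nat.finite_of_card_ne_zero (by rw [hcard]; positivity)
  have : Fact (Nat.Prime 3) := ⟨Nat.prime_three⟩
  obtain ⟨s, hs⟩ := exists_prime_orderOf_dvd_card' (G := G) 3
    (hcard ▸ Dvd.dvd.mul_right (by norm_num) _)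
  have hsQ : s ∉ Q := fun h => by
    have := hs ▸ Subgroup.orderOf_dvd_natCard Q h
    rw [hG.card_Q] at this
    exact absurd (Nat.Prime.dvd_of_dvd_pow Nat.prime_three this) (by norm_num)
  obtain ⟨t, ht⟩ := QuotientGroup.mk_surjective (e.symm (Equiv.swap 0 1))
  have hswap : Equiv.swap (0 : Fin 3) 1 ^ 2 = 1 := by decide
  have ht2 : (t : G ⧸ Q) ^ 2 = 1 := by rw [ht, ← map_pow, hswap, map_one]
  have ht1 : (t : G ⧸ Q) ≠ 1 := by rw [ht]; simp
  have hs3 : (s : G ⧸ Q) ^ 3 = 1 := by rw [← QuotientGroup.mk_pow, ← hs, pow_orderOf_eq_one]; rfl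
  have hs1 : (s : G ⧸ Q) ≠ 1 := by rwa [ne_eq, QuotientGroup.eq_one_iff]
  refine ⟨s, t, hs, hsQ, ?_, ?_, ?_⟩
  · rwa [← QuotientGroup.eq_one_iff]
  · rwa [← QuotientGroup.eq_one_iff]
  · rw [← QuotientGroup.eq_one_iff]
    exact mul_conj_eq_one_of_mulEquiv_perm_three e hs3 hs1 ht2 ht1

theorem le_normalizer_of_le {E : Subgroup G} (hZE : centerOf G Q ≤ E) (hEQ : E ≤ Q) :
    Q ≤ Subgroup.normalizer (E : Set G) :=
  Subgroup.le_normalizer_iff.mpr fun q hq x hx => by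
    have : q * x * q⁻¹ = ⁅q, x⁆ * x := by simp only [commutatorElement_def]; group
    rw [this]
    exact mul_mem (hZE (hG.comm_mem_center q hq x (hEQ hx))) hx

section S3Lift

variable (A : S3Lift G Q)

theorem sup_closure_eq_top : Q ⊔ Subgroup.closure {A.s, A.t} = ⊤ := by
  have := hG.normal
  obtain ⟨e⟩ := hG.quot_iso
  have hs3 : (A.s : G ⧸ Q) ^ 3 = 1 := by
    rw [← QuotientGroup.mk_pow, ← A.orderOf_s, pow_orderOf_eq_one]; rfl
  have hs1 : (A.s : G ⧸ Q) ≠ 1 := by rw [ne_eq, QuotientGroup.eq_one_iff]; exact A.s_notMem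
  have ht2 : (A.t : G ⧸ Q) ^ 2 = 1 := by
    rw [← QuotientGroup.mk_pow, QuotientGroup.eq_one_iff]; exact A.t_sq_mem
  have ht1 : (A.t : G ⧸ Q) ≠ 1 := by rw [ne_eq, QuotientGroup.eq_one_iff]; exact A.t_notMem
  rw [← QuotientGroup.comap_map_mk', MonoidHom.map_closure, Set.image_pair,
    QuotientGroup.mk'_apply, QuotientGroup.mk'_apply,
    closure_pair_eq_top_of_mulEquiv_perm_three e hs3 hs1 ht2 ht1, Subgroup.comap_top]

theorem normal_of_conj_mem {E : Subgroup G} (hZE : centerOf G Q ≤ E) (hEQ : E ≤ Q)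
    (hs : ∀ x ∈ E, A.s * x * A.s⁻¹ ∈ E) (ht : ∀ x ∈ E, A.t * x * A.t⁻¹ ∈ E) : E.Normal := by
  have : Finite Q := Nat.finite_of_card_ne_zero (by rw [hG.card_Q]; positivity)
  have : Finite E := Finite.of_injective _ (Subgroup.inclusion_injective hEQ)
  rw [← Subgroup.normalizer_eq_top_iff, eq_top_iff, ← hG.sup_closure_eq_top A]
  refine sup_le (hG.le_normalizer_of_le hZE hEQ) (Subgroup.closure_le _ |>.mpr ?_)
  rintro g (rfl | rfl)
  exacts [Subgroup.mem_normalizer_fintype hs, Subgroup.mem_normalizer_fintype ht]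

/-- If `a` is not fixed by `t` modulo `Z`, then `a · aᵗ` is, because `t²` acts trivially and
`Q ⧸ Z` is abelian. -/
theorem exists_mem_commutatorElement_mem {D : Subgroup G} (hD : IsDent G Q D) :
    ∃ a ∈ D, a ∉ centerOf G Q ∧ ⁅A.t, a⁆ ∈ centerOf G Q := by
  obtain ⟨a, haD, haZ⟩ := SetLike.exists_of_lt hD.center_lt
  by_cases hat : ⁅A.t, a⁆ ∈ centerOf G Q
  · exact ⟨a, haD, haZ, hat⟩
  set u := A.t * a * A.t⁻¹
  have haQ : a ∈ Q := hD.lt_Q.le haD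
  have huD : u ∈ D := hD.normal.conj_mem a haD A.t
  have huQ : u ∈ Q := hD.lt_Q.le huD
  refine ⟨a * u, mul_mem haD huD, fun h => hat ?_, ?_⟩
  · have : ⁅A.t, a⁆ = (a * u) * (a * a)⁻¹ := by
      calc ⁅A.t, a⁆ = a⁻¹ * (a * u) * a⁻¹ := by simp only [u, commutatorElement_def]; group
        _ = (a * u) * a⁻¹ * a⁻¹ := by rw [(commute_of_mem_centerOf h (inv_mem haQ)).eq]
        _ = (a * u) * (a * a)⁻¹ := by group
    rw [this]
    exact mul_mem h (inv_mem (hG.sq_mem_center a haQ))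
  · have ht2 : A.t * A.t ∈ Q := by simpa [pow_two] using A.t_sq_mem
    have : ⁅A.t, a * u⁆ = u * ⁅A.t * A.t, a⁆ * u⁻¹ * ⁅u, a⁆ := by
      simp only [u, commutatorElement_def]; group
    rw [this]
    exact mul_mem (hG.centerOf_normal.conj_mem _ (hG.comm_mem_center _ ht2 a haQ) u)
      (hG.comm_mem_center u huQ a haQ)

/-- `a · aˢ · aˢˢ ∈ Z` gives invariance under `s`; invariance under `t` follows from `aᵗ ∈ Z a` and
`t s t⁻¹ ∈ s⁻¹ Q`. -/
theorem normal_sup_closure {a : G} (haQ : a ∈ Q) (hat : ⁅A.t, a⁆ ∈ centerOf G Q) :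
    (centerOf G Q ⊔ Subgroup.closure {a, A.s * a * A.s⁻¹}).Normal := by
  have := hG.centerOf_normal
  set E := centerOf G Q ⊔ Subgroup.closure {a, A.s * a * A.s⁻¹}
  have haE : a ∈ E := Subgroup.mem_sup_right (Subgroup.subset_closure (by simp))
  have ha'E : A.s * a * A.s⁻¹ ∈ E := Subgroup.mem_sup_right (Subgroup.subset_closure (by simp))
  have hZE : centerOf G Q ≤ E := le_sup_left
  have hEQ : E ≤ Q := sup_le centerOf_le <| Subgroup.closure_le _ |>.mpr <| by
    rintro _ (rfl | rfl)
    exacts [haQ, hG.normal.conj_mem a haQ A.s]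
  have hsE : ∀ x ∈ E, A.s * x * A.s⁻¹ ∈ E := conj_mem_sup_closure <| by
    rintro _ (rfl | rfl)
    · exact ha'E
    · have hw := hG.mul_conj_mul_conj_mem_centerOf A.orderOf_s haQ
      have : A.s * (A.s * a * A.s⁻¹) * A.s⁻¹ = (a * (A.s * a * A.s⁻¹))⁻¹ *
          (a * (A.s * a * A.s⁻¹) * (A.s * (A.s * a * A.s⁻¹) * A.s⁻¹)) := by group
      rw [this]
      exact mul_mem (inv_mem (mul_mem haE ha'E)) (hZE hw)
  have hQE : ∀ q ∈ Q, ∀ x ∈ E, q * x * q⁻¹ ∈ E :=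
    Subgroup.le_normalizer_iff.mp (hG.le_normalizer_of_le hZE hEQ)
  have htE : ∀ x ∈ E, A.t * x * A.t⁻¹ ∈ E := conj_mem_sup_closure <| by
    have hta : A.t * a * A.t⁻¹ ∈ E := by
      have : A.t * a * A.t⁻¹ = ⁅A.t, a⁆ * a := by simp only [commutatorElement_def]; group
      exact this ▸ mul_mem (hZE hat) haE
    rintro _ (rfl | rfl)
    · exact hta
    · have hs3 : A.s ^ 3 = 1 := A.orderOf_s ▸ pow_orderOf_eq_one A.s
      set q := A.s * (A.t * A.s * A.t⁻¹)
      have : A.t * (A.s * a * A.s⁻¹) * A.t⁻¹ =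
          A.s * (A.s * (q * (A.t * a * A.t⁻¹) * q⁻¹) * A.s⁻¹) * A.s⁻¹ := by
        calc _ = A.s ^ 3 * A.s⁻¹ * (q * (A.t * a * A.t⁻¹) * q⁻¹) * A.s * (A.s ^ 3)⁻¹ := by
              rw [hs3]; simp only [q]; group
          _ = _ := by rw [pow_three]; group
      rw [this]
      exact hsE _ (hsE _ (hQE q A.mul_conj_mem _ hta))
  exact hG.normal_of_conj_mem A hZE hEQ hsE htE

theorem _root_.IsDent.eq_sup_closure {D : Subgroup G} (hD : IsDent G Q D) {a : G} (haD : a ∈ D)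
    (haZ : a ∉ centerOf G Q) (hat : ⁅A.t, a⁆ ∈ centerOf G Q) :
    D = centerOf G Q ⊔ Subgroup.closure {a, A.s * a * A.s⁻¹} := by
  refine (hD.minimal _ (hG.normal_sup_closure A (hD.lt_Q.le haD) hat) (lt_of_le_of_ne le_sup_left
    fun h => haZ (h ▸ Subgroup.mem_sup_right (Subgroup.subset_closure (by simp)))) ?_).symm
  exact sup_le hD.center_lt.le <| Subgroup.closure_le _ |>.mpr <| by
    rintro _ (rfl | rfl)
    exacts [haD, hD.normal.conj_mem a haD A.s]

theorem dentsCommute_of_commutatorElement_eq_one {D E : Subgroup G}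
    (hD : IsDent G Q D) (hE : IsDent G Q E) {a b : G} (haD : a ∈ D) (haZ : a ∉ centerOf G Q)
    (hat : ⁅A.t, a⁆ ∈ centerOf G Q) (hbE : b ∈ E) (hbZ : b ∉ centerOf G Q)
    (hbt : ⁅A.t, b⁆ ∈ centerOf G Q) (hab : ⁅a, b⁆ = 1) : DentsCommute G D E := by
  have haQ : a ∈ Q := hD.lt_Q.le haD
  have hbQ : b ∈ Q := hE.lt_Q.le hbE
  have hs := A.orderOf_s
  have key : ∀ x ∈ ({a, A.s * a * A.s⁻¹} : Set G), ∀ y ∈ ({b, A.s * b * A.s⁻¹} : Set G),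
      ⁅x, y⁆ = 1 := by
    rintro _ (rfl | rfl) _ (rfl | rfl)
    · exact hab
    · exact hG.commutatorElement_conj_right_eq_one hs haQ hbQ hab
    · rw [← commutatorElement_inv, hG.commutatorElement_conj_right_eq_one hs hbQ haQ
        (by rw [← commutatorElement_inv, hab, inv_one]), inv_one]
    · rw [← conjugate_commutatorElement, hab, mul_one, mul_inv_cancel]
  rw [dentsCommute_iff_le_centralizer, hE.eq_sup_closure hG A hbE hbZ hbt]
  refine sup_le (fun z hz => Subgroup.mem_centralizer_iff_commutator_eq_one.mpr fun d hd =>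
    commutatorElement_eq_one_of_mem_centerOf_right (hD.lt_Q.le hd) hz) ?_
  refine Subgroup.closure_le _ |>.mpr fun y hy => ?_
  have hyQ : y ∈ Q := by
    rcases hy with rfl | rfl
    exacts [hbQ, hG.normal.conj_mem b hbQ A.s]
  have hDy : D ≤ Subgroup.centralizer {y} := by
    rw [hD.eq_sup_closure hG A haD haZ hat]
    refine sup_le (fun z hz => ?_) (Subgroup.closure_le _ |>.mpr fun x hx => ?_) <;>
      refine Subgroup.mem_centralizer_iff_commutator_eq_one'.mpr fun k hk => ?_ <;>
      rw [Set.mem_singleton_iff.mp hk]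
    exacts [commutatorElement_eq_one_of_mem_centerOf_left hyQ hz, key x hx y hy]
  exact Subgroup.mem_centralizer_iff_commutator_eq_one.mpr fun d hd =>
    Subgroup.mem_centralizer_iff_commutator_eq_one'.mp (hDy hd) y rfl

end S3Lift

theorem commutatorElement_mem_centralizer {t d f : G} (hd : d ∈ Q) (hf : f ∈ Q)
    (hdt : ⁅t, d⁆ ∈ centerOf G Q) (hft : ⁅t, f⁆ ∈ centerOf G Q) :
    ⁅d, f⁆ ∈ Subgroup.centralizer {t} := by
  have hconj : ∀ x, t * x * t⁻¹ = ⁅t, x⁆ * x := fun x => by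
    simp only [commutatorElement_def]; group
  have : t * ⁅d, f⁆ * t⁻¹ = ⁅d, f⁆ := by
    rw [conjugate_commutatorElement, hconj d, hconj f,
      hG.commutatorElement_mul_centerOf hd hf hdt hft]
  rw [Subgroup.mem_centralizer_singleton_iff]
  calc ⁅d, f⁆ * t = (t * ⁅d, f⁆ * t⁻¹) * t := by rw [this]
    _ = t * ⁅d, f⁆ := by group

/-- Two distinct nontrivial fixed points would make `t` centralise `Z ≅ 2²`, on which `G ⧸ Q`
acts faithfully. -/
theorem eq_of_mem_centralizer_inf_centerOf {t α β : G} (ht : t ∉ Q)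
    (hα : α ∈ Subgroup.centralizer {t} ⊓ centerOf G Q)
    (hβ : β ∈ Subgroup.centralizer {t} ⊓ centerOf G Q) (hα1 : α ≠ 1) (hβ1 : β ≠ 1) :
    α = β := by
  by_contra hne
  have hC := Subgroup.eq_of_le_of_card_eq_four inf_le_right hG.card_center hα hβ hα1 hβ1 hne
  refine ht (hG.center_faithful t fun z hz => ?_)
  rw [← hC] at hz
  rw [← Subgroup.mem_centralizer_singleton_iff.mp hz.1]
  group

theorem dentsCommute_of_not_dentsCommute {D₁ D₂ D₃ D : Subgroup G}
    (hdiag : IsDiagonal G Q D₁ D₂ D₃) (hD : IsDent G Q D) (h₁ : ¬DentsCommute G D D₁)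
    (h₂ : ¬DentsCommute G D D₂) : DentsCommute G D D₃ := by
  obtain ⟨hD₁, hD₂, hD₃, h₁₂, h₃₁, h₃₂, hle⟩ := hdiag
  obtain ⟨A⟩ := hG.nonempty_s3Lift
  have := hG.centerOf_normal
  have := hD₂.normal
  by_contra h₃
  obtain ⟨d, hdD, hdZ, hdt⟩ := hG.exists_mem_commutatorElement_mem A hD
  obtain ⟨e, heD, heZ, het⟩ := hG.exists_mem_commutatorElement_mem A hD₃
  obtain ⟨f₁, hf₁, f₂, hf₂, rfl⟩ := Subgroup.mem_sup_of_normal_right.mp (hle heD)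
  have hf₁Z : f₁ ∉ centerOf G Q := fun h =>
    heZ (hD₃.inf_le_centerOf hD₂ h₃₂ ⟨heD, mul_mem (hD₂.center_lt.le h) hf₂⟩)
  have hf₂Z : f₂ ∉ centerOf G Q := fun h =>
    heZ (hD₃.inf_le_centerOf hD₁ h₃₁ ⟨heD, mul_mem hf₁ (hD₁.center_lt.le h)⟩)
  obtain ⟨hf₁t, hf₂t⟩ := hD₁.commutatorElement_mem_centerOf_of_mul hD₂ h₁₂ hf₁ hf₂ het
  have hdQ : d ∈ Q := hD.lt_Q.le hdD
  have hf₁Q : f₁ ∈ Q := hD₁.lt_Q.le hf₁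
  have hf₂Q : f₂ ∈ Q := hD₂.lt_Q.le hf₂
  have hα : ⁅d, f₁⁆ ≠ 1 := fun h =>
    h₁ (hG.dentsCommute_of_commutatorElement_eq_one A hD hD₁ hdD hdZ hdt hf₁ hf₁Z hf₁t h)
  have hβ : ⁅d, f₂⁆ ≠ 1 := fun h =>
    h₂ (hG.dentsCommute_of_commutatorElement_eq_one A hD hD₂ hdD hdZ hdt hf₂ hf₂Z hf₂t h)
  refine h₃ (hG.dentsCommute_of_commutatorElement_eq_one A hD hD₃ hdD hdZ hdt heD heZ het ?_)
  rw [hG.commutatorElement_mul_right hdQ hf₁Q hf₂Q,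
    hG.eq_of_mem_centralizer_inf_centerOf A.t_notMem
      ⟨hG.commutatorElement_mem_centralizer hdQ hf₁Q hdt hf₁t, hG.comm_mem_center d hdQ f₁ hf₁Q⟩
      ⟨hG.commutatorElement_mem_centralizer hdQ hf₂Q hdt hf₂t, hG.comm_mem_center d hdQ f₂ hf₂Q⟩
      hα hβ]
  exact hG.center_exponent _ (hG.comm_mem_center d hdQ f₂ hf₂Q)

end IsBiextraspecial

/-- for distinct dents `D₁, D₂` with diagonal dent `D₃`, any dent `D`
commutes with all three of them or with exactly one of them. -/
theorem stmt6 (G : Type*) [Group G] (Q : Subgroup G) (m : ℕ)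
    (hG : IsBiextraspecial G Q m)
    (D₁ D₂ D₃ : Subgroup G) (hdiag : IsDiagonal G Q D₁ D₂ D₃)
    (D : Subgroup G) (hD : IsDent G Q D) :
    (DentsCommute G D D₁ ∧ DentsCommute G D D₂ ∧ DentsCommute G D D₃) ∨
      (DentsCommute G D D₁ ∧ ¬DentsCommute G D D₂ ∧ ¬DentsCommute G D D₃) ∨
      (¬DentsCommute G D D₁ ∧ DentsCommute G D D₂ ∧ ¬DentsCommute G D D₃) ∨
      (¬DentsCommute G D D₁ ∧ ¬DentsCommute G D D₂ ∧ DentsCommute G D D₃) := by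
  have ⟨h₁, h₂, h₃, _, h₃₁, h₃₂, hle⟩ := hdiag
  have hle₂ : D₂ ≤ D₁ ⊔ D₃ := h₁.le_sup_of_le_sup h₂ h₃ h₃₁ hle
  have hle₁ : D₁ ≤ D₂ ⊔ D₃ := h₂.le_sup_of_le_sup h₁ h₃ h₃₂ (sup_comm D₁ D₂ ▸ hle)
  by_cases hc₁ : DentsCommute G D D₁ <;> by_cases hc₂ : DentsCommute G D D₂
  · exact Or.inl ⟨hc₁, hc₂, hc₁.of_le_sup hc₂ hle⟩
  · exact Or.inr <| Or.inl ⟨hc₁, hc₂, fun hc₃ => hc₂ (hc₁.of_le_sup hc₃ hle₂)⟩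
  · exact Or.inr <| Or.inr <| Or.inl ⟨hc₁, hc₂, fun hc₃ => hc₁ (hc₂.of_le_sup hc₃ hle₁)⟩
  · exact Or.inr <| Or.inr <| Or.inr
      ⟨hc₁, hc₂, hG.dentsCommute_of_not_dentsCommute hdiag hD hc₁ hc₂⟩
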